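/- arXiv:2103.13523 — 5 statements merged into one kernel-verified Lean document; each statement's English description precedes it below -/
import Mathlib

section
/- Let Ā ∈ ℝ^{p×p} be symmetric with eigenvalues ordered by absolute value |λ₁| ≥ ⋯ ≥ |λ_p|, let P ∈ ℝ^{p×m} have as columns orthonormal eigenvectors of Ā corresponding to λ₁,…,λ_m, and assume λ_m ≠ 0; set γ = |λ_{m+1}/λ_m|. Let Q_{t-1} ∈ ℝ^{p×m} satisfy Q_{t-1}ᵀQ_{t-1} = I_m, and let Q_t ∈ ℝ^{p×m} with orthonormal columns and R_t ∈ ℝ^{m×m} be obtained from a QR factorization Q_t R_t = Ā Q_{t-1} (with Ā Q_{t-1} of full column rank). Then ‖PᵀQ_t‖₂² ≥ ‖PᵀQ_{t-1}‖_F² / ((1−γ²)‖PᵀQ_{t-1}‖_F² + m γ²). -/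
open Matrix

noncomputable def specNorm {p m : ℕ} (A : Matrix (Fin p) (Fin m) ℝ) : ℝ :=
  ‖LinearMap.toContinuousLinearMap (Matrix.toEuclideanLin A)‖

noncomputable def frobNorm {p m : ℕ} (A : Matrix (Fin p) (Fin m) ℝ) : ℝ :=
  Real.sqrt (∑ i, ∑ j, (A i j) ^ 2)

noncomputable def enorm {p : ℕ} (v : Fin p → ℝ) : ℝ :=
  Real.sqrt (∑ i, (v i) ^ 2)

noncomputable def l0norm {p : ℕ} (v : Fin p → ℝ) : ℕ :=
  (Finset.univ.filter fun i => v i ≠ 0).card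

noncomputable def truncate {p : ℕ} (y : Fin p → ℝ) (F : Finset (Fin p)) : Fin p → ℝ :=
  fun i => if i ∈ F then y i else 0

noncomputable def rhoEK {p m : ℕ} (E : Matrix (Fin p) (Fin p) ℝ) (K : Fin m → ℕ) : ℝ :=
  sSup {c | ∃ Q : Matrix (Fin p) (Fin m) ℝ,
    Qᵀ * Q = 1 ∧ (∀ i, l0norm (fun r => Q r i) ≤ K i) ∧ c = specNorm (E * Q)}

noncomputable def sinTheta2 {p m : ℕ} (P Q : Matrix (Fin p) (Fin m) ℝ) : ℝ :=
  specNorm ((1 - P * Pᵀ) * Q)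

noncomputable def sinThetaF {p m : ℕ} (P Q : Matrix (Fin p) (Fin m) ℝ) : ℝ :=
  frobNorm ((1 - P * Pᵀ) * Q)

lemma specNorm_bound {p m : ℕ} (A : Matrix (Fin p) (Fin m) ℝ) (x : Fin m → ℝ) :
    ∑ i, ((A *ᵥ x) i) ^ 2 ≤ specNorm A ^ 2 * ∑ j, (x j) ^ 2 := by
  have h := (LinearMap.toContinuousLinearMap (Matrix.toEuclideanLin A)).le_opNorm
    ((WithLp.equiv 2 (Fin m → ℝ)).symm x)
  have hy : ‖(WithLp.equiv 2 (Fin m → ℝ)).symm x‖ = Real.sqrt (∑ j, (x j) ^ 2) := by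
    rw [EuclideanSpace.norm_eq]; simp [sq_abs, sq]
  have hx : (LinearMap.toContinuousLinearMap (Matrix.toEuclideanLin A))
      ((WithLp.equiv 2 (Fin m → ℝ)).symm x) = (WithLp.equiv 2 (Fin p → ℝ)).symm (A *ᵥ x) := by
    simp [LinearMap.coe_toContinuousLinearMap']
  have hz : ‖(WithLp.equiv 2 (Fin p → ℝ)).symm (A *ᵥ x)‖ = Real.sqrt (∑ i, ((A *ᵥ x) i) ^ 2) := by
    rw [EuclideanSpace.norm_eq]; simp [sq_abs, sq]
  rw [hx, hz, hy] at h
  have h1 : (0:ℝ) ≤ ∑ i, ((A *ᵥ x) i) ^ 2 := Finset.sum_nonneg fun _ _ => sq_nonneg _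
  have h2 : (0:ℝ) ≤ ∑ j, (x j) ^ 2 := Finset.sum_nonneg fun _ _ => sq_nonneg _
  calc ∑ i, ((A *ᵥ x) i) ^ 2 = Real.sqrt (∑ i, ((A *ᵥ x) i) ^ 2) ^ 2 := (Real.sq_sqrt h1).symm
    _ ≤ (specNorm A * Real.sqrt (∑ j, (x j) ^ 2)) ^ 2 :=
        pow_le_pow_left₀ (Real.sqrt_nonneg _) h 2
    _ = specNorm A ^ 2 * ∑ j, (x j) ^ 2 := by rw [mul_pow, Real.sq_sqrt h2]

lemma sum_sq_mulVec {n q : ℕ} (A : Matrix (Fin q) (Fin n) ℝ) (h : Aᵀ * A = 1)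
    (y : Fin n → ℝ) : ∑ i, ((A *ᵥ y) i) ^ 2 = ∑ j, (y j) ^ 2 := by
  have h1 : ∑ i, ((A *ᵥ y) i) ^ 2 = (A *ᵥ y) ⬝ᵥ (A *ᵥ y) := by
    simp [dotProduct, sq]
  have h2 : (A *ᵥ y) ⬝ᵥ (A *ᵥ y) = ((A *ᵥ y) ᵥ* A) ⬝ᵥ y := Matrix.dotProduct_mulVec _ _ _
  have h3 : (A *ᵥ y) ᵥ* A = y := by
    rw [← Matrix.vecMul_transpose, Matrix.vecMul_vecMul, h, Matrix.vecMul_one]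
  rw [h1, h2, h3]
  simp [dotProduct, sq]

lemma abs_sq_le {x y : ℝ} (h : |x| ≤ |y|) : x ^ 2 ≤ y ^ 2 := by
  rw [← sq_abs x, ← sq_abs y]; exact pow_le_pow_left₀ (abs_nonneg x) h 2

set_option maxHeartbeats 1000000 in
/-- one-step progress bound for the standard orthogonal iteration. -/
theorem orthogonal_iteration_progress
    {p m : ℕ} (hm1 : 1 ≤ m) (hmp : m < p)
    (Abar : Matrix (Fin p) (Fin p) ℝ) (hAsym : Abar.IsSymm)
    (lam : Fin p → ℝ)
    (hord : ∀ i j : Fin p, i ≤ j → |lam j| ≤ |lam i|)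
    (V : Matrix (Fin p) (Fin p) ℝ) (hV : Vᵀ * V = 1)
    (hAV : Abar * V = V * Matrix.diagonal lam)
    (P : Matrix (Fin p) (Fin m) ℝ)
    (hP : P = V.submatrix id (Fin.castLE hmp.le))
    (hlm : lam ⟨m - 1, by omega⟩ ≠ 0)
    (γ : ℝ) (hγ : γ = |lam ⟨m, hmp⟩ / lam ⟨m - 1, by omega⟩|)
    (Qprev Qt : Matrix (Fin p) (Fin m) ℝ) (Rt : Matrix (Fin m) (Fin m) ℝ)
    (hQprev : Qprevᵀ * Qprev = 1)
    (hQt : Qtᵀ * Qt = 1)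
    (hRtri : Rt.BlockTriangular id) (hRinv : IsUnit Rt.det)
    (hQR : Qt * Rt = Abar * Qprev) :
    specNorm (Pᵀ * Qt) ^ 2 ≥
      frobNorm (Pᵀ * Qprev) ^ 2 /
        ((1 - γ ^ 2) * frobNorm (Pᵀ * Qprev) ^ 2 + m * γ ^ 2) := by
  classical
  set c : Fin m → Fin p := Fin.castLE hmp.le with hc
  set L : ℝ := lam ⟨m - 1, by omega⟩ with hLdef
  set M : ℝ := lam ⟨m, hmp⟩ with hMdef
  have hVVT : V * Vᵀ = 1 := mul_eq_one_comm.mp hV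
  set C : Matrix (Fin p) (Fin m) ℝ := Vᵀ * Qprev with hCdef
  have hPT : Pᵀ = Vᵀ.submatrix c id := by rw [hP, Matrix.transpose_submatrix]
  have hVA : Vᵀ * Abar = Matrix.diagonal lam * Vᵀ := by
    have h1 : Vᵀ * Abar = (Abar * V)ᵀ := by rw [Matrix.transpose_mul, hAsym.eq]
    rw [h1, hAV, Matrix.transpose_mul, Matrix.diagonal_transpose]
  have hsubmul : ∀ B : Matrix (Fin p) (Fin m) ℝ,
      Vᵀ.submatrix c id * B = (Vᵀ * B).submatrix c id := by
    intro B
    have h := Matrix.submatrix_mul Vᵀ B c id id Function.bijective_id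
    rw [Matrix.submatrix_id_id] at h
    exact h.symm
  have hS : Pᵀ * Qprev = C.submatrix c id := by rw [hPT, hsubmul, hCdef]
  have hkey : Pᵀ * Qt * Rt = (Matrix.diagonal lam * C).submatrix c id := by
    rw [Matrix.mul_assoc, hQR, hPT, hsubmul, ← Matrix.mul_assoc, hVA, Matrix.mul_assoc, hCdef]
  have hC1 : Cᵀ * C = 1 := by
    calc Cᵀ * C = Qprevᵀ * (V * (Vᵀ * Qprev)) := by
          rw [hCdef, Matrix.transpose_mul, Matrix.transpose_transpose, Matrix.mul_assoc]
      _ = Qprevᵀ * Qprev := by rw [← Matrix.mul_assoc V, hVVT, Matrix.one_mul]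
      _ = 1 := hQprev
  -- Frobenius norm squared
  have hfrob : frobNorm (Pᵀ * Qprev) ^ 2 = ∑ i, ∑ j, ((Pᵀ * Qprev) i j) ^ 2 :=
    Real.sq_sqrt (Finset.sum_nonneg fun _ _ => Finset.sum_nonneg fun _ _ => sq_nonneg _)
  set f : ℝ := ∑ i, ∑ j, ((Pᵀ * Qprev) i j) ^ 2 with hfdef
  rw [ge_iff_le, hfrob]
  have hfnn : (0:ℝ) ≤ f := by
    rw [hfdef]
    exact Finset.sum_nonneg fun _ _ => Finset.sum_nonneg fun _ _ => sq_nonneg _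
  rcases hfnn.eq_or_lt with hf0 | hfpos
  · rw [← hf0, zero_div]; exact sq_nonneg _
  -- choose the best column j₀
  have hmq : (0:ℝ) < m := by exact_mod_cast hm1
  obtain ⟨j₀, -, hj₀⟩ := Finset.exists_max_image Finset.univ
      (fun j => ∑ i, ((Pᵀ * Qprev) i j) ^ 2) ⟨⟨0, hm1⟩, Finset.mem_univ _⟩
  set u : Fin p → ℝ := fun i => C i j₀ with hu
  set s : ℝ := ∑ i : Fin m, (u (c i)) ^ 2 with hs
  have hscol : ∑ i, ((Pᵀ * Qprev) i j₀) ^ 2 = s := by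
    rw [hs]
    apply Finset.sum_congr rfl
    intro i _
    simp only [hS, hu, Matrix.submatrix_apply, id_eq]
  have hfm : f ≤ m * s := by
    have h1 : f = ∑ j, ∑ i, ((Pᵀ * Qprev) i j) ^ 2 := Finset.sum_comm
    have h2 : ∑ j, ∑ i, ((Pᵀ * Qprev) i j) ^ 2 ≤
        Finset.univ.card • ∑ i, ((Pᵀ * Qprev) i j₀) ^ 2 :=
      Finset.sum_le_card_nsmul _ _ _ fun x _ => hj₀ x (Finset.mem_univ x)
    rw [Finset.card_univ, Fintype.card_fin, nsmul_eq_mul, hscol] at h2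
    linarith [h1 ▸ h2]
  -- total mass one
  have htot : ∑ i : Fin p, (u i) ^ 2 = 1 := by
    have h1 : ∑ i : Fin p, (u i) ^ 2 = (Cᵀ * C) j₀ j₀ := by
      rw [Matrix.mul_apply]
      apply Finset.sum_congr rfl
      intro i _
      simp only [Matrix.transpose_apply, hu]
      ring
    rw [h1, hC1, Matrix.one_apply_eq]
  -- split the index set
  set t : Finset (Fin p) := Finset.univ.map (Fin.castLEEmb hmp.le) with ht
  have hcompl : ∀ i : Fin p, i ∈ tᶜ → m ≤ (i : ℕ) := by
    intro i hi
    by_contra hlt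
    push_neg at hlt
    exact (Finset.mem_compl.mp hi)
      (by rw [ht, Finset.mem_map]; exact ⟨⟨i, hlt⟩, Finset.mem_univ _, rfl⟩)
  have hsum_t : ∀ g : Fin p → ℝ, ∑ i ∈ t, g i = ∑ i : Fin m, g (c i) := by
    intro g; rw [ht, Finset.sum_map]; rfl
  set a : ℝ := ∑ i : Fin m, (lam (c i) * u (c i)) ^ 2 with ha
  set b : ℝ := ∑ i ∈ tᶜ, (lam i * u i) ^ 2 with hb
  have hd : ∑ i : Fin p, (lam i * u i) ^ 2 = a + b := by
    rw [ha, hb, ← hsum_t (fun i => (lam i * u i) ^ 2), Finset.sum_add_sum_compl]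
  have hst : ∑ i ∈ tᶜ, (u i) ^ 2 = 1 - s := by
    have h1 := Finset.sum_add_sum_compl t (fun i => (u i) ^ 2)
    rw [hsum_t (fun i => (u i) ^ 2), htot] at h1
    rw [← hs] at h1
    linarith
  have hs1 : s ≤ 1 := by
    have h1 : (0:ℝ) ≤ ∑ i ∈ tᶜ, (u i) ^ 2 := Finset.sum_nonneg fun _ _ => sq_nonneg _
    linarith [hst ▸ h1]
  have hbnn : (0:ℝ) ≤ b := Finset.sum_nonneg fun _ _ => sq_nonneg _
  -- eigenvalue bounds
  have hble : b ≤ M ^ 2 * (1 - s) := by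
    calc b ≤ ∑ i ∈ tᶜ, M ^ 2 * (u i) ^ 2 := by
          apply Finset.sum_le_sum
          intro i hi
          rw [mul_pow]
          refine mul_le_mul_of_nonneg_right (abs_sq_le ?_) (sq_nonneg _)
          exact hord ⟨m, hmp⟩ i (by rw [Fin.le_def]; exact hcompl i hi)
      _ = M ^ 2 * (1 - s) := by rw [← Finset.mul_sum, hst]
  have hale : L ^ 2 * s ≤ a := by
    rw [hs, Finset.mul_sum, ha]
    apply Finset.sum_le_sum
    intro i _
    rw [mul_pow]
    refine mul_le_mul_of_nonneg_right (abs_sq_le ?_) (sq_nonneg _)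
    refine hord (c i) ⟨m - 1, by omega⟩ ?_
    rw [Fin.le_def, hc]
    have := i.isLt
    simp only [Fin.coe_castLE]
    omega
  -- spectral norm bound
  set w : Fin m → ℝ := Pi.single j₀ 1 with hw
  have hfun : (Pᵀ * Qt) *ᵥ (Rt *ᵥ w) = fun i => lam (c i) * u (c i) := by
    rw [Matrix.mulVec_mulVec, hkey, hw, Matrix.mulVec_single]
    funext i
    rw [Pi.smul_apply, MulOpposite.op_one, one_smul, Matrix.col_apply, Matrix.submatrix_apply, id_eq,
      Matrix.diagonal_mul, hu]
  have hzfun : Qt *ᵥ (Rt *ᵥ w) = (Abar * Qprev) *ᵥ w := by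
    rw [Matrix.mulVec_mulVec, hQR]
  have hVz : Vᵀ *ᵥ ((Abar * Qprev) *ᵥ w) = fun i => lam i * u i := by
    rw [Matrix.mulVec_mulVec, ← Matrix.mul_assoc, hVA, Matrix.mul_assoc, ← hCdef, hw,
      Matrix.mulVec_single]
    funext i
    rw [Pi.smul_apply, MulOpposite.op_one, one_smul, Matrix.col_apply, Matrix.diagonal_mul, hu]
  have hXsum : ∑ j, ((Rt *ᵥ w) j) ^ 2 = a + b := by
    rw [← sum_sq_mulVec Qt hQt (Rt *ᵥ w), hzfun,
      ← sum_sq_mulVec Vᵀ (by rw [Matrix.transpose_transpose]; exact hVVT) ((Abar * Qprev) *ᵥ w),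
      hVz, ← hd]
  have hspec : a ≤ specNorm (Pᵀ * Qt) ^ 2 * (a + b) := by
    have h0 := specNorm_bound (Pᵀ * Qt) (Rt *ᵥ w)
    rw [hfun, hXsum] at h0
    rw [ha]
    exact h0
  -- scalar arithmetic
  have hLne : L ≠ 0 := hlm
  have hL2 : (0:ℝ) < L ^ 2 := by
    have h0 := sq_nonneg L
    rcases h0.eq_or_lt with h | h
    · exact absurd (pow_eq_zero_iff (n := 2) (by norm_num) |>.mp h.symm) hLne
    · exact h
  have hM2 : M ^ 2 = γ ^ 2 * L ^ 2 := by
    have hγ' : γ = |M / L| := hγ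
    rw [hγ', sq_abs, div_pow, div_mul_cancel₀ _ (pow_ne_zero 2 hLne)]
  clear_value c C u w t L M f s a b
  clear hfun hzfun hVz hXsum hS hkey hC1 hsubmul hVA hPT hVVT hscol htot hcompl
    hsum_t hd hst hγ hP hAV hV hord hAsym hQR hQt hQprev hlm hRtri hRinv hj₀
    hfrob hfdef hs ha hb hu hw ht hc hCdef hLdef hMdef
  clear w u C t c j₀ Abar V Qprev Rt lam
  have hspos : 0 < s := by nlinarith
  have hapos : 0 < a := lt_of_lt_of_le (mul_pos hL2 hspos) hale
  have hfm' : f ≤ m := le_trans hfm (by nlinarith)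
  have hγnn : (0:ℝ) ≤ γ ^ 2 := sq_nonneg γ
  have hD : 0 < (1 - γ ^ 2) * f + m * γ ^ 2 := by nlinarith
  rw [div_le_iff₀ hD]
  set N2 : ℝ := specNorm (Pᵀ * Qt) ^ 2 with hN2
  have hN2nn : (0:ℝ) ≤ N2 := sq_nonneg _
  have step1 : a ≤ N2 * (a + M ^ 2 * (1 - s)) := by nlinarith
  have step2 : f * (a + M ^ 2 * (1 - s)) ≤ a * ((1 - γ ^ 2) * f + m * γ ^ 2) := by
    rw [hM2]
    nlinarith [mul_nonneg (mul_nonneg hγnn hL2.le) (sub_nonneg.2 hfm),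
      mul_nonneg hγnn (mul_nonneg (sub_nonneg.2 hale) (sub_nonneg.2 hfm'))]
  have hdpos : 0 < a + M ^ 2 * (1 - s) := by nlinarith [sq_nonneg M]
  have step3 : a * ((1 - γ ^ 2) * f + m * γ ^ 2) ≤
      (N2 * ((1 - γ ^ 2) * f + m * γ ^ 2)) * (a + M ^ 2 * (1 - s)) := by
    nlinarith [mul_le_mul_of_nonneg_right step1 hD.le]
  exact le_of_mul_le_mul_right (le_trans step2 step3) hdpos
end

section
/- Let A = Ā + E where A, Ā ∈ ℝ^{p×p} are symmetric positive semidefinite, let P ∈ ℝ^{p×m} have as columns orthonormal eigenvectors of Ā corresponding to its m largest eigenvalues, and assume λ₁(Ā) = 1. Let Q ∈ ℝ^{p×m} satisfy QᵀQ = I_m and have column sparsity ‖q_i‖₀ ≤ k_i for i = 1,…,m, with ĀQ ≠ 0 and AQ ≠ 0. Then ‖PᵀAQ‖_F²/‖AQ‖_F² ≥ ‖PᵀĀQ‖_F²/‖ĀQ‖_F² − 4m ρ(E,K)/‖ĀQ‖_F², where ρ(E,K) = max{‖EQ'‖₂ : Q' ∈ ℝ^{p×m}, Q'ᵀQ' =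 I_m, ‖q'_i‖₀ ≤ k_i for each i}. -/
open Matrix

section helpers
variable {p m : ℕ}

private lemma sum_sq_eq_trace (X : Matrix (Fin p) (Fin m) ℝ) :
    ∑ i, ∑ j, X i j ^ 2 = Matrix.trace (Xᵀ * X) := by
  simp only [Matrix.trace, Matrix.diag, Matrix.mul_apply, Matrix.transpose_apply, sq]
  rw [Finset.sum_comm]

private lemma frob_sq (A : Matrix (Fin p) (Fin m) ℝ) :
    frobNorm A ^ 2 = ∑ i, ∑ j, (A i j)^2 :=
  Real.sq_sqrt (Finset.sum_nonneg fun _ _ => Finset.sum_nonneg fun _ _ => sq_nonneg _)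

private lemma frob_nonneg (A : Matrix (Fin p) (Fin m) ℝ) : 0 ≤ frobNorm A :=
  Real.sqrt_nonneg _

private lemma contraction (P : Matrix (Fin p) (Fin m) ℝ) (hP : Pᵀ * P = 1)
    (M : Matrix (Fin p) (Fin m) ℝ) :
    ∑ i, ∑ j, ((Pᵀ * M) i j) ^ 2 ≤ ∑ i, ∑ j, (M i j) ^ 2 := by
  set e : Matrix (Fin p) (Fin p) ℝ := P * Pᵀ with he
  set N : Matrix (Fin p) (Fin m) ℝ := (1 - e) * M with hN
  have hee : e * e = e := by
    rw [he, Matrix.mul_assoc, ← Matrix.mul_assoc Pᵀ, hP, Matrix.one_mul]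
  have het : eᵀ = e := by rw [he, Matrix.transpose_mul, Matrix.transpose_transpose]
  have key : Nᵀ * N = Mᵀ * M - (Pᵀ * M)ᵀ * (Pᵀ * M) := by
    have h0 : (1 - e) * (1 - e) = (1 : Matrix (Fin p) (Fin p) ℝ) - e := by
      rw [Matrix.sub_mul, Matrix.one_mul, Matrix.mul_sub, Matrix.mul_one, hee]
      abel
    have h1 : (1 - e) * N = N := by
      rw [hN, ← Matrix.mul_assoc, h0]
    rw [hN, Matrix.transpose_mul, Matrix.transpose_sub, Matrix.transpose_one, het,
      Matrix.mul_assoc, h1, hN, ← Matrix.mul_assoc, Matrix.mul_sub, Matrix.mul_one]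
    rw [Matrix.sub_mul, Matrix.transpose_mul, Matrix.transpose_transpose, he,
      Matrix.mul_assoc Mᵀ]
    rw [Matrix.mul_assoc P, ← Matrix.mul_assoc Mᵀ]
  have h2 : (0:ℝ) ≤ ∑ i, ∑ j, (N i j) ^ 2 :=
    Finset.sum_nonneg fun _ _ => Finset.sum_nonneg fun _ _ => sq_nonneg _
  have h3 := sum_sq_eq_trace N
  rw [key, Matrix.trace_sub, ← sum_sq_eq_trace, ← sum_sq_eq_trace] at h3
  linarith

private lemma contraction' (P : Matrix (Fin p) (Fin m) ℝ) (hP : Pᵀ * P = 1)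
    (M : Matrix (Fin p) (Fin m) ℝ) : frobNorm (Pᵀ * M) ≤ frobNorm M :=
  Real.sqrt_le_sqrt (contraction P hP M)

private lemma orth_inv (V : Matrix (Fin p) (Fin p) ℝ) (hV : Vᵀ * V = 1)
    (X : Matrix (Fin p) (Fin m) ℝ) :
    ∑ i, ∑ j, ((V * X) i j) ^ 2 = ∑ i, ∑ j, (X i j) ^ 2 := by
  rw [sum_sq_eq_trace, sum_sq_eq_trace, Matrix.transpose_mul, Matrix.mul_assoc,
    ← Matrix.mul_assoc Vᵀ, hV, Matrix.one_mul]

private lemma norm_toEuc (M : Matrix (Fin p) (Fin m) ℝ) (x : EuclideanSpace ℝ (Fin m)) :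
    ‖Matrix.toEuclideanLin M x‖ ^ 2 = ∑ i, (M.mulVec ((WithLp.equiv 2 _) x) i)^2 := by
  rw [EuclideanSpace.norm_eq, Real.sq_sqrt (Finset.sum_nonneg fun _ _ => sq_nonneg _)]
  refine Finset.sum_congr rfl fun i _ => ?_
  rw [Real.norm_eq_abs, sq_abs]; rfl

private lemma col_le_spec (M : Matrix (Fin p) (Fin m) ℝ) (j : Fin m) :
    ∑ i, (M i j)^2 ≤ specNorm M ^ 2 := by
  have h := ContinuousLinearMap.le_opNorm
    (LinearMap.toContinuousLinearMap (Matrix.toEuclideanLin M)) (EuclideanSpace.single j (1:ℝ))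
  rw [EuclideanSpace.norm_single, norm_one, mul_one] at h
  have h2 : ‖LinearMap.toContinuousLinearMap (Matrix.toEuclideanLin M)
      (EuclideanSpace.single j (1:ℝ))‖ ^2 = ∑ i, (M i j)^2 := by
    have := norm_toEuc M (EuclideanSpace.single j (1:ℝ))
    rw [show (LinearMap.toContinuousLinearMap (Matrix.toEuclideanLin M))
        (EuclideanSpace.single j (1:ℝ)) = Matrix.toEuclideanLin M (EuclideanSpace.single j (1:ℝ))
        from rfl, this]
    refine Finset.sum_congr rfl fun i _ => ?_
    congr 1
    have : (WithLp.equiv 2 (Fin m → ℝ)) (EuclideanSpace.single j (1:ℝ)) = Pi.single j 1 := rfl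
    rw [this, Matrix.mulVec_single]
    simp
  rw [← h2]
  unfold specNorm
  exact pow_le_pow_left₀ (norm_nonneg _) h 2

private lemma frob_le_spec (M : Matrix (Fin p) (Fin m) ℝ) :
    frobNorm M ^ 2 ≤ m * specNorm M ^ 2 := by
  rw [frob_sq, Finset.sum_comm]
  calc ∑ j, ∑ i, (M i j)^2 ≤ ∑ _j : Fin m, specNorm M ^2 :=
        Finset.sum_le_sum fun j _ => col_le_spec M j
    _ = m * specNorm M ^2 := by simp [Finset.sum_const, nsmul_eq_mul]

private lemma spec_le_frob (M : Matrix (Fin p) (Fin m) ℝ) :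
    specNorm M ≤ frobNorm M := by
  refine ContinuousLinearMap.opNorm_le_bound _ (Real.sqrt_nonneg _) fun x => ?_
  have hx : ‖x‖^2 = ∑ j, (x j)^2 := by
    rw [EuclideanSpace.norm_eq, Real.sq_sqrt (Finset.sum_nonneg fun _ _ => sq_nonneg _)]
    exact Finset.sum_congr rfl fun i _ => by rw [Real.norm_eq_abs, sq_abs]
  have key : ‖LinearMap.toContinuousLinearMap (Matrix.toEuclideanLin M) x‖^2
      ≤ (frobNorm M * ‖x‖)^2 := by
    rw [show (LinearMap.toContinuousLinearMap (Matrix.toEuclideanLin M)) x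
        = Matrix.toEuclideanLin M x from rfl, norm_toEuc]
    have CS : ∀ i : Fin p, (M.mulVec ((WithLp.equiv 2 _) x) i)^2
        ≤ (∑ j, (M i j)^2) * (∑ j, (x j)^2) := by
      intro i
      have h := Finset.sum_mul_sq_le_sq_mul_sq Finset.univ (fun j => M i j) (fun j => x j)
      simpa [Matrix.mulVec, dotProduct, sq] using h
    calc ∑ i, (M.mulVec ((WithLp.equiv 2 _) x) i)^2
        ≤ ∑ i, (∑ j, (M i j)^2) * (∑ j, (x j)^2) := Finset.sum_le_sum fun i _ => CS i
      _ = (∑ i, ∑ j, (M i j)^2) * (∑ j, (x j)^2) := by rw [Finset.sum_mul]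
      _ = (frobNorm M * ‖x‖)^2 := by rw [mul_pow, frob_sq, hx]
  exact le_of_pow_le_pow_left₀ two_ne_zero
    (mul_nonneg (Real.sqrt_nonneg _) (norm_nonneg _)) key

private lemma frob_eq_norm (A : Matrix (Fin p) (Fin m) ℝ) :
    frobNorm A = ‖(WithLp.equiv 2 (Fin p × Fin m → ℝ)).symm (fun ij => A ij.1 ij.2)‖ := by
  rw [EuclideanSpace.norm_eq, frobNorm]
  congr 1
  rw [Fintype.sum_prod_type]
  exact Finset.sum_congr rfl fun i _ => Finset.sum_congr rfl fun j _ => by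
    rw [Real.norm_eq_abs, sq_abs]; rfl

private lemma frob_triangle (X Y : Matrix (Fin p) (Fin m) ℝ) :
    frobNorm (X + Y) ≤ frobNorm X + frobNorm Y := by
  rw [frob_eq_norm, frob_eq_norm, frob_eq_norm]
  have : (WithLp.equiv 2 (Fin p × Fin m → ℝ)).symm (fun ij => (X + Y) ij.1 ij.2)
      = (WithLp.equiv 2 (Fin p × Fin m → ℝ)).symm (fun ij => X ij.1 ij.2)
        + (WithLp.equiv 2 (Fin p × Fin m → ℝ)).symm (fun ij => Y ij.1 ij.2) := rfl
  rw [this]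
  exact norm_add_le _ _

private lemma frob_neg (X : Matrix (Fin p) (Fin m) ℝ) : frobNorm (-X) = frobNorm X := by
  unfold frobNorm
  congr 1
  exact Finset.sum_congr rfl fun i _ => Finset.sum_congr rfl fun j _ => by
    rw [Matrix.neg_apply, neg_sq]

private lemma frob_pos (A : Matrix (Fin p) (Fin m) ℝ) (hA : A ≠ 0) :
    0 < frobNorm A := by
  rw [frobNorm]
  apply Real.sqrt_pos.mpr
  rcases lt_or_eq_of_le (Finset.sum_nonneg fun i _ =>
    Finset.sum_nonneg fun j _ => sq_nonneg (A i j)) with h | h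
  · exact h
  · exfalso; apply hA
    ext i j
    have h1 := (Finset.sum_eq_zero_iff_of_nonneg fun i _ =>
      Finset.sum_nonneg fun j _ => sq_nonneg (A i j)).mp h.symm i (Finset.mem_univ i)
    have h2 := (Finset.sum_eq_zero_iff_of_nonneg fun j _ => sq_nonneg (A i j)).mp h1 j
      (Finset.mem_univ j)
    have := pow_eq_zero_iff (n := 2) two_ne_zero |>.mp h2
    simpa using this

private lemma sqle_aux (s u mm sig rho : ℝ) (hs0 : 0 ≤ s) (hu0 : 0 ≤ u)
    (hrho0 : 0 ≤ rho) (hm0 : 0 ≤ mm)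
    (hs2 : s^2 ≤ mm * sig^2) (hspec2 : sig^2 ≤ rho^2) (hum : u^2 ≤ mm) :
    s * u ≤ mm * rho := by
  have hns : 0 ≤ mm * sig^2 := le_trans (sq_nonneg s) hs2
  have hsq : (s*u)^2 ≤ (mm*rho)^2 := by
    calc (s*u)^2 = s^2 * u^2 := by ring
      _ ≤ (mm*sig^2) * u^2 := mul_le_mul_of_nonneg_right hs2 (sq_nonneg u)
      _ ≤ (mm*sig^2) * mm := mul_le_mul_of_nonneg_left hum hns
      _ ≤ (mm*rho^2) * mm := mul_le_mul_of_nonneg_right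
          (mul_le_mul_of_nonneg_left hspec2 hm0) hm0
      _ = (mm*rho)^2 := by ring
  exact le_of_pow_le_pow_left₀ two_ne_zero (mul_nonneg hm0 hrho0) hsq

private lemma final_algebra (t u ta ub s r : ℝ) (hu : 0 < u) (hub : 0 < ub)
    (ht0 : 0 ≤ t) (hta0 : 0 ≤ ta) (hs : 0 ≤ s)
    (htu : t ≤ u) (hta : t ≤ ta + s) (hubu : ub ≤ u + s) (hsu : s * u ≤ r) :
    t^2/u^2 - 4*r/u^2 ≤ ta^2/ub^2 := by
  rw [div_sub_div_same, div_le_div_iff₀ (by positivity) (by positivity)]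
  by_cases hcase : t^2 ≤ 4*(s*u)
  · have h1 : t^2 - 4*r ≤ 0 := by linarith
    have : (t^2 - 4*r) * ub^2 ≤ 0 := mul_nonpos_of_nonpos_of_nonneg h1 (sq_nonneg _)
    nlinarith [sq_nonneg ta, sq_nonneg u]
  · push_neg at hcase
    have hts : s < t := by nlinarith
    have h2 : (t - s)^2 ≤ ta^2 := by nlinarith
    have hub2 : ub^2 ≤ (u+s)^2 := by nlinarith
    have hkey : (t^2 - 4*(s*u))*(u+s)^2 ≤ (t-s)^2*u^2 := by
      nlinarith [mul_nonneg hs (mul_nonneg (mul_nonneg hu.le (by linarith : (0:ℝ) ≤ 2*u+t))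
        (sub_nonneg.2 htu)), mul_nonneg (sq_nonneg s) (by nlinarith : (0:ℝ) ≤ 9*u^2 - t^2),
        mul_nonneg (mul_nonneg hs hs) (mul_nonneg hs hu.le)]
    have h3 : (t^2 - 4*r)*ub^2 ≤ (t^2 - 4*(s*u))*ub^2 := by nlinarith [sq_nonneg ub]
    have h4 : (t^2 - 4*(s*u))*ub^2 ≤ (t^2 - 4*(s*u))*(u+s)^2 := by nlinarith
    nlinarith [pow_le_pow_left₀ (by linarith : (0:ℝ) ≤ t - s) (by linarith : t - s ≤ ta) 2]

end helpers

set_option maxHeartbeats 1000000 in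
/-- perturbation bound (Lemma on the error term). -/
theorem perturbation_bound
    {p m : ℕ} (hm1 : 1 ≤ m) (hmp : m ≤ p)
    (Abar A E : Matrix (Fin p) (Fin p) ℝ)
    (hAbar : Abar.PosSemidef) (hA : A.PosSemidef)
    (hAE : A = Abar + E)
    (lam : Fin p → ℝ)
    (hord : ∀ i j : Fin p, i ≤ j → lam j ≤ lam i)
    (hlam1 : lam ⟨0, by omega⟩ = 1)
    (V : Matrix (Fin p) (Fin p) ℝ) (hV : Vᵀ * V = 1)
    (hAV : Abar * V = V * Matrix.diagonal lam)
    (P : Matrix (Fin p) (Fin m) ℝ)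
    (hP : P = V.submatrix id (Fin.castLE hmp))
    (K : Fin m → ℕ)
    (Q : Matrix (Fin p) (Fin m) ℝ) (hQ : Qᵀ * Q = 1)
    (hQsparse : ∀ i : Fin m, l0norm (fun r => Q r i) ≤ K i)
    (hAbarQ : Abar * Q ≠ 0) (hAQ : A * Q ≠ 0) :
    frobNorm (Pᵀ * (A * Q)) ^ 2 / frobNorm (A * Q) ^ 2 ≥
      frobNorm (Pᵀ * (Abar * Q)) ^ 2 / frobNorm (Abar * Q) ^ 2
        - 4 * m * rhoEK E K / frobNorm (Abar * Q) ^ 2 := by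
  -- orthonormality of P
  have hPtP : Pᵀ * P = 1 := by
    subst hP
    ext i j
    have : (((V.submatrix id (Fin.castLE hmp))ᵀ) * (V.submatrix id (Fin.castLE hmp))) i j
        = (Vᵀ * V) (Fin.castLE hmp i) (Fin.castLE hmp j) := by
      simp [Matrix.mul_apply, Matrix.transpose_apply, Matrix.submatrix_apply]
    rw [this, hV]
    by_cases hij : i = j
    · subst hij; simp
    · rw [Matrix.one_apply_ne, Matrix.one_apply_ne hij]
      exact fun hc => hij ((Fin.castLE_inj).mp hc)
  -- eigenvalue bounds
  have hVdiag : ∀ i : Fin p, (∑ r, V r i * V r i) = 1 := by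
    intro i
    have h := congrFun (congrFun hV i) i
    simp only [Matrix.mul_apply, Matrix.transpose_apply, Matrix.one_apply_eq] at h
    exact h
  have hlam0 : ∀ i : Fin p, (0:ℝ) ≤ lam i := by
    intro i
    have h := hAbar.dotProduct_mulVec_nonneg (fun r => V r i)
    have hcalc : star (fun r => V r i) ⬝ᵥ (Abar *ᵥ fun r => V r i) = lam i := by
      have h1 : (Abar *ᵥ fun r => V r i) = fun r => (Abar * V) r i := by
        funext r; simp [Matrix.mulVec, Matrix.mul_apply, dotProduct]
      rw [h1, hAV]
      have : star (fun r => V r i) ⬝ᵥ (fun r => (V * Matrix.diagonal lam) r i)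
          = ∑ r, V r i * (V r i * lam i) := by
        simp only [dotProduct, star_trivial, Matrix.mul_diagonal]
      rw [this]
      calc ∑ r, V r i * (V r i * lam i) = (∑ r, V r i * V r i) * lam i := by
            rw [Finset.sum_mul]; exact Finset.sum_congr rfl fun r _ => by ring
        _ = lam i := by rw [hVdiag i, one_mul]
    rw [hcalc] at h
    exact h
  have hlamle : ∀ i : Fin p, lam i ≤ 1 := by
    intro i
    have := hord ⟨0, by omega⟩ i (by simp [Fin.le_def])
    rwa [hlam1] at this
  -- notation
  set t := frobNorm (Pᵀ * (Abar * Q)) with hts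
  set u := frobNorm (Abar * Q) with hus
  set ta := frobNorm (Pᵀ * (A * Q)) with htas
  set ub := frobNorm (A * Q) with hubs
  set s := frobNorm (E * Q) with hss
  set ρ := rhoEK E K with hrs
  have hu : 0 < u := frob_pos _ hAbarQ
  have hub : 0 < ub := frob_pos _ hAQ
  have ht0 : 0 ≤ t := frob_nonneg _
  have hta0 : 0 ≤ ta := frob_nonneg _
  have hs0 : 0 ≤ s := frob_nonneg _
  have htu : t ≤ u := contraction' P hPtP _
  have hsplit : A * Q = Abar * Q + E * Q := by rw [hAE, Matrix.add_mul]
  have hubu : ub ≤ u + s := by rw [hubs, hsplit]; exact frob_triangle _ _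
  have hta : t ≤ ta + s := by
    have h1 : Pᵀ * (Abar * Q) = Pᵀ * (A * Q) + -(Pᵀ * (E * Q)) := by
      rw [hsplit, Matrix.mul_add]; abel
    calc t = frobNorm (Pᵀ * (A * Q) + -(Pᵀ * (E * Q))) := by rw [hts, h1]
      _ ≤ ta + frobNorm (-(Pᵀ * (E * Q))) := frob_triangle _ _
      _ = ta + frobNorm (Pᵀ * (E * Q)) := by rw [frob_neg]
      _ ≤ ta + s := by
          have := contraction' P hPtP (E * Q)
          linarith
  -- u^2 ≤ m
  have hVVt : V * Vᵀ = 1 := mul_eq_one_comm.mp hV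
  have hum : u^2 ≤ (m:ℝ) := by
    have hdecomp : Abar * Q = V * (Matrix.diagonal lam * (Vᵀ * Q)) := by
      calc Abar * Q = Abar * ((V * Vᵀ) * Q) := by rw [hVVt, Matrix.one_mul]
        _ = (Abar * V) * (Vᵀ * Q) := by
            rw [Matrix.mul_assoc, Matrix.mul_assoc]
        _ = V * (Matrix.diagonal lam * (Vᵀ * Q)) := by rw [hAV, Matrix.mul_assoc]
    set R := Vᵀ * Q with hR
    have hRR : Rᵀ * R = 1 := by
      rw [hR, Matrix.transpose_mul, Matrix.transpose_transpose, Matrix.mul_assoc,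
        ← Matrix.mul_assoc V, hVVt, Matrix.one_mul, hQ]
    have h1 : u^2 = ∑ i, ∑ j, ((Matrix.diagonal lam * R) i j)^2 := by
      rw [hus, frob_sq, hdecomp]
      exact orth_inv V hV _
    have h2 : ∑ i, ∑ j, ((Matrix.diagonal lam * R) i j)^2 ≤ ∑ i, ∑ j, (R i j)^2 := by
      refine Finset.sum_le_sum fun i _ => Finset.sum_le_sum fun j _ => ?_
      rw [Matrix.diagonal_mul, mul_pow]
      have hl2 : lam i ^ 2 ≤ 1 := by nlinarith [hlam0 i, hlamle i]
      nlinarith [sq_nonneg (R i j), hlam0 i]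
    have h3 : ∑ i, ∑ j, (R i j)^2 = (m:ℝ) := by
      rw [sum_sq_eq_trace, hRR, Matrix.trace_one]
      simp
    linarith
  -- rho facts
  have hrho_mem : specNorm (E * Q) ∈ {c | ∃ Q' : Matrix (Fin p) (Fin m) ℝ,
      Q'ᵀ * Q' = 1 ∧ (∀ i, l0norm (fun r => Q' r i) ≤ K i) ∧ c = specNorm (E * Q')} :=
    ⟨Q, hQ, hQsparse, rfl⟩
  have hbdd : BddAbove {c | ∃ Q' : Matrix (Fin p) (Fin m) ℝ,
      Q'ᵀ * Q' = 1 ∧ (∀ i, l0norm (fun r => Q' r i) ≤ K i) ∧ c = specNorm (E * Q')} := by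
    refine ⟨Real.sqrt (∑ i, ∑ _j : Fin m, (∑ k, |E i k|)^2), fun c hc => ?_⟩
    obtain ⟨Q', hQ'1, _, rfl⟩ := hc
    have hQ'bd : ∀ k j, |Q' k j| ≤ 1 := by
      intro k j
      have h := congrFun (congrFun hQ'1 j) j
      simp only [Matrix.mul_apply, Matrix.transpose_apply, Matrix.one_apply_eq] at h
      have hterm : Q' k j * Q' k j ≤ 1 := by
        rw [← h]
        exact Finset.single_le_sum (fun r _ => mul_self_nonneg (Q' r j)) (Finset.mem_univ k)
      exact abs_le_one_iff_mul_self_le_one.mpr hterm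
    refine le_trans (spec_le_frob _) ?_
    rw [frobNorm]
    apply Real.sqrt_le_sqrt
    refine Finset.sum_le_sum fun i _ => Finset.sum_le_sum fun j _ => ?_
    have habs : |(E * Q') i j| ≤ ∑ k, |E i k| := by
      rw [Matrix.mul_apply]
      refine le_trans (Finset.abs_sum_le_sum_abs _ _) (Finset.sum_le_sum fun k _ => ?_)
      rw [abs_mul]
      exact mul_le_of_le_one_right (abs_nonneg _) (hQ'bd k j)
    calc ((E * Q') i j)^2 = |(E * Q') i j|^2 := (sq_abs _).symm
      _ ≤ (∑ k, |E i k|)^2 := pow_le_pow_left₀ (abs_nonneg _) habs 2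
  have hrho1 : specNorm (E * Q) ≤ ρ := le_csSup hbdd hrho_mem
  have hrho0 : 0 ≤ ρ := le_trans (norm_nonneg _) hrho1
  -- s * u ≤ m * ρ
  have hsu : s * u ≤ (m:ℝ) * ρ :=
    sqle_aux s u (m:ℝ) (specNorm (E * Q)) ρ hs0 hu.le hrho0 (Nat.cast_nonneg m)
      (frob_le_spec (E * Q)) (pow_le_pow_left₀ (norm_nonneg _) hrho1 2) hum
  have := final_algebra t u ta ub s ((m:ℝ)*ρ) hu hub ht0 hta0 hs0 htu hta hubu hsu
  rw [ge_iff_le]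
  calc t^2/u^2 - 4*(m:ℝ)*ρ/u^2 = t^2/u^2 - 4*((m:ℝ)*ρ)/u^2 := by rw [mul_assoc]
    _ ≤ ta^2/ub^2 := this
end

section
/- Let P, Q ∈ ℝ^{p×m} have orthonormal columns, and for 0 ≤ i ≤ m let [P]_i and [Q]_i denote the submatrices of the first i columns. Then for every 0 ≤ i < m, 1 − |p_{i+1}ᵀ q_{i+1}| ≤ ‖([Q]_{i+1}[Q]_{i+1}ᵀ − [P]_{i+1}[P]_{i+1}ᵀ) + ([P]_i[P]_iᵀ − [Q]_i[Q]_iᵀ)‖₂, where p_{i+1}, q_{i+1} are the (i+1)-st columns of P and Q. Consequently, if for each i a sequence of orthonormal matrices Q^{(t)} satisfies [Q^{(t)}]_i[Q^{(t)}]_iᵀ → [P]_i[P]_iᵀ as t → ∞, then |p_iᵀ q_i^{(t)}| → 1 for every column i. -/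
open Matrix

/-- The submatrix consisting of the first `i` columns. -/
noncomputable def firstCols {p m : ℕ} (P : Matrix (Fin p) (Fin m) ℝ) (i : ℕ) (h : i ≤ m) :
    Matrix (Fin p) (Fin i) ℝ := P.submatrix id (Fin.castLE h)

/-- Orthogonal projector onto the span of the first `i` columns. -/
noncomputable def projFirst {p m : ℕ} (P : Matrix (Fin p) (Fin m) ℝ) (i : ℕ) (h : i ≤ m) :
    Matrix (Fin p) (Fin p) ℝ := firstCols P i h * (firstCols P i h)ᵀ

/- Auxiliary lemmas -/

lemma colSq {p m : ℕ} (P : Matrix (Fin p) (Fin m) ℝ) (hP : Pᵀ * P = 1) (i : Fin m) :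
    ∑ r, P r i ^ 2 = 1 := by
  have h := congrFun (congrFun hP i) i
  simp only [Matrix.mul_apply, Matrix.transpose_apply, Matrix.one_apply_eq] at h
  simpa [pow_two] using h

lemma csle {p m : ℕ} (P Q : Matrix (Fin p) (Fin m) ℝ) (hP : Pᵀ * P = 1) (hQ : Qᵀ * Q = 1)
    (i : Fin m) : |∑ r, P r i * Q r i| ≤ 1 := by
  rw [← sq_le_one_iff_abs_le_one]
  calc (∑ r, P r i * Q r i) ^ 2 ≤ (∑ r, P r i ^ 2) * ∑ r, Q r i ^ 2 :=
        Finset.sum_mul_sq_le_sq_mul_sq _ _ _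
    _ = 1 := by rw [colSq P hP i, colSq Q hQ i, one_mul]

lemma specNorm_cont {p m : ℕ} : Continuous fun A : Matrix (Fin p) (Fin m) ℝ => specNorm A := by
  have : Continuous fun A : Matrix (Fin p) (Fin m) ℝ =>
      LinearMap.toContinuousLinearMap (Matrix.toEuclideanLin A) := by
    let L : Matrix (Fin p) (Fin m) ℝ →ₗ[ℝ]
        (EuclideanSpace ℝ (Fin m) →L[ℝ] EuclideanSpace ℝ (Fin p)) :=
      (LinearMap.toContinuousLinearMap :
        (EuclideanSpace ℝ (Fin m) →ₗ[ℝ] EuclideanSpace ℝ (Fin p)) ≃ₗ[ℝ] _).toLinearMap.comp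
        (Matrix.toEuclideanLin).toLinearMap
    exact L.continuous_of_finiteDimensional
  exact continuous_norm.comp this

lemma specNorm_zero {p m : ℕ} : specNorm (0 : Matrix (Fin p) (Fin m) ℝ) = 0 := by
  simp [specNorm]

lemma specNorm_ge {p m : ℕ} (A : Matrix (Fin p) (Fin m) ℝ) (v : Fin m → ℝ)
    (hv : ∑ s, v s ^ 2 = 1) :
    Real.sqrt (∑ r, (A.mulVec v r) ^ 2) ≤ specNorm A := by
  have h := (LinearMap.toContinuousLinearMap (Matrix.toEuclideanLin A)).le_opNorm
    ((WithLp.equiv 2 (Fin m → ℝ)).symm v)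
  rw [LinearMap.coe_toContinuousLinearMap'] at h
  rw [WithLp.equiv_symm_apply, Matrix.toEuclideanLin_apply_piLp_toLp] at h
  rw [EuclideanSpace.norm_eq, EuclideanSpace.norm_eq] at h
  simp only [PiLp.toLp_apply, Real.norm_eq_abs, sq_abs] at h
  rw [hv, Real.sqrt_one, mul_one] at h
  exact h

lemma projFirst_succ {p m : ℕ} (P : Matrix (Fin p) (Fin m) ℝ) (i : Fin m) :
    projFirst P (i.1 + 1) i.isLt =
      projFirst P i.1 i.isLt.le + Matrix.of (fun r s => P r i * P s i) := by
  ext r s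
  simp only [projFirst, firstCols, Matrix.mul_apply, Matrix.transpose_apply,
    Matrix.submatrix_apply, id_eq, Matrix.add_apply, Matrix.of_apply]
  rw [Fin.sum_univ_castSucc]
  have h1 : Fin.castLE i.isLt (Fin.last i.1) = i := Fin.ext (by simp)
  have h2 : ∀ j : Fin i.1, Fin.castLE i.isLt j.castSucc = Fin.castLE i.isLt.le j :=
    fun j => Fin.ext (by simp)
  simp only [h1, h2]

lemma key_ineq {p m : ℕ} (P Q : Matrix (Fin p) (Fin m) ℝ)
    (hP : Pᵀ * P = 1) (hQ : Qᵀ * Q = 1) (i : Fin m) :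
    1 - |∑ r, P r i * Q r i| ≤
      specNorm ((projFirst Q (i.1 + 1) i.isLt - projFirst P (i.1 + 1) i.isLt)
        + (projFirst P i.1 i.isLt.le - projFirst Q i.1 i.isLt.le)) := by
  set c : ℝ := ∑ r, P r i * Q r i with hc
  set E := (projFirst Q (i.1 + 1) i.isLt - projFirst P (i.1 + 1) i.isLt)
        + (projFirst P i.1 i.isLt.le - projFirst Q i.1 i.isLt.le) with hE
  have hEeq : E = Matrix.of (fun r s => Q r i * Q s i - P r i * P s i) := by
    rw [hE, projFirst_succ Q i, projFirst_succ P i]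
    ext r s
    simp [Matrix.add_apply, Matrix.sub_apply]
    ring
  have hmul : ∀ r, E.mulVec (fun s => P s i) r = Q r i * c - P r i := by
    intro r
    rw [hEeq]
    simp only [Matrix.mulVec, dotProduct, Matrix.of_apply]
    rw [hc]
    rw [Finset.sum_congr rfl (fun s _ => by ring :
      ∀ s ∈ Finset.univ, (Q r i * Q s i - P r i * P s i) * P s i
        = Q r i * (P s i * Q s i) - P r i * (P s i * P s i))]
    rw [Finset.sum_sub_distrib, ← Finset.mul_sum, ← Finset.mul_sum]
    have : ∑ s, P s i * P s i = 1 := by simpa [pow_two] using colSq P hP i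
    rw [this, mul_one]
  have hsum : ∑ r, (E.mulVec (fun s => P s i) r) ^ 2 = 1 - c ^ 2 := by
    simp only [hmul]
    rw [Finset.sum_congr rfl (fun r _ => by ring :
      ∀ r ∈ Finset.univ, (Q r i * c - P r i) ^ 2
        = c ^ 2 * Q r i ^ 2 - 2 * c * (P r i * Q r i) + P r i ^ 2)]
    rw [Finset.sum_add_distrib, Finset.sum_sub_distrib, ← Finset.mul_sum, ← Finset.mul_sum,
      colSq P hP i, colSq Q hQ i, ← hc]
    ring
  have habs : |c| ≤ 1 := csle P Q hP hQ i
  have hge := specNorm_ge E (fun s => P s i) (colSq P hP i)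
  rw [hsum] at hge
  refine le_trans ?_ hge
  have h0 : (0:ℝ) ≤ 1 - c ^ 2 := by nlinarith [sq_abs c, abs_nonneg c]
  nlinarith [Real.sq_sqrt h0, Real.sqrt_nonneg (1 - c ^ 2), sq_abs c, abs_nonneg c]

/-- convergence of projectors implies column-wise convergence. -/
theorem projector_convergence_implies_column_convergence
    {p m : ℕ} (P : Matrix (Fin p) (Fin m) ℝ) (hP : Pᵀ * P = 1) :
    (∀ Q : Matrix (Fin p) (Fin m) ℝ, Qᵀ * Q = 1 →
      ∀ i : Fin m,
        1 - |∑ r, P r i * Q r i| ≤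
          specNorm ((projFirst Q (i.1 + 1) i.isLt - projFirst P (i.1 + 1) i.isLt)
            + (projFirst P i.1 i.isLt.le - projFirst Q i.1 i.isLt.le)))
    ∧
    (∀ Qs : ℕ → Matrix (Fin p) (Fin m) ℝ, (∀ t, (Qs t)ᵀ * Qs t = 1) →
      (∀ (i : ℕ) (h : i ≤ m),
        Filter.Tendsto (fun t => projFirst (Qs t) i h) Filter.atTop
          (nhds (projFirst P i h))) →
      ∀ i : Fin m,
        Filter.Tendsto (fun t => |∑ r, P r i * Qs t r i|) Filter.atTop (nhds 1)) := by
  constructor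
  · intro Q hQ i
    exact key_ineq P Q hP hQ i
  · intro Qs hQs hproj i
    have hE : Filter.Tendsto (fun t =>
        (projFirst (Qs t) (i.1 + 1) i.isLt - projFirst P (i.1 + 1) i.isLt)
          + (projFirst P i.1 i.isLt.le - projFirst (Qs t) i.1 i.isLt.le))
        Filter.atTop (nhds 0) := by
      have h1 := (hproj (i.1 + 1) i.isLt).sub
        (tendsto_const_nhds (x := projFirst P (i.1 + 1) i.isLt) (f := Filter.atTop (α := ℕ)))
      have h2 := (tendsto_const_nhds (x := projFirst P i.1 i.isLt.le)
        (f := Filter.atTop (α := ℕ))).sub (hproj i.1 i.isLt.le)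
      have := h1.add h2
      simpa using this
    have he : Filter.Tendsto (fun t => specNorm
        ((projFirst (Qs t) (i.1 + 1) i.isLt - projFirst P (i.1 + 1) i.isLt)
          + (projFirst P i.1 i.isLt.le - projFirst (Qs t) i.1 i.isLt.le)))
        Filter.atTop (nhds 0) := by
      have := (specNorm_cont.tendsto 0).comp hE
      simpa [specNorm_zero, Function.comp_def] using this
    have hlow : Filter.Tendsto (fun t => 1 - specNorm
        ((projFirst (Qs t) (i.1 + 1) i.isLt - projFirst P (i.1 + 1) i.isLt)
          + (projFirst P i.1 i.isLt.le - projFirst (Qs t) i.1 i.isLt.le)))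
        Filter.atTop (nhds 1) := by
      have := (tendsto_const_nhds (x := (1:ℝ)) (f := Filter.atTop (α := ℕ))).sub he
      simpa using this
    refine tendsto_of_tendsto_of_tendsto_of_le_of_le hlow tendsto_const_nhds ?_ ?_
    · intro t
      have h := key_ineq P (Qs t) hP (hQs t) i
      show 1 - specNorm _ ≤ |∑ r, P r i * Qs t r i|
      linarith
    · intro t
      exact csle P (Qs t) hP (hQs t) i
end

section
/- Let (s_t)_{t≥0} ⊆ [0,1) be a sequence satisfying, for all t ≥ 1, s_t² ≤ γ² s_{t-1}²/(1 − (1−γ²)s_{t-1}²) + δ for constants γ ∈ [0,1) and δ ≥ 0, and assume s_t ≤ s_0 for all t. Then for all t ≥ 0, s_t ≤ μ^t s_0 + √δ (1−μ^t)/(1−μ), where μ = γ/√(1 − (1−γ²)s_0²) ≤ 1. (This is the uniform convergence bound for the Truncated Power Method, with s_t = |sin∠(p̄,q_t)| and δ = δ_E + δ_Truncate.) -/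
open Matrix

/-- uniform convergence bound for the recursive sequence. -/
theorem uniform_convergence_bound
    (γ δ : ℝ) (hγ0 : 0 ≤ γ) (hγ1 : γ < 1) (hδ : 0 ≤ δ)
    (s : ℕ → ℝ) (hs0 : ∀ t, 0 ≤ s t) (hs1 : ∀ t, s t < 1)
    (hrec : ∀ t : ℕ,
      s (t + 1) ^ 2 ≤ γ ^ 2 * s t ^ 2 / (1 - (1 - γ ^ 2) * s t ^ 2) + δ)
    (hmono : ∀ t, s t ≤ s 0)
    (μ : ℝ) (hμ : μ = γ / Real.sqrt (1 - (1 - γ ^ 2) * s 0 ^ 2)) :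
    ∀ t : ℕ, s t ≤ μ ^ t * s 0 + Real.sqrt δ * (1 - μ ^ t) / (1 - μ) := by

  -- Setup
  set D0 : ℝ := 1 - (1 - γ ^ 2) * s 0 ^ 2 with hD0def
  have hs01 : s 0 ^ 2 < 1 := by nlinarith [hs0 0, hs1 0]
  have h1γ : 0 < 1 - γ ^ 2 := by nlinarith
  have hγ2D0 : γ ^ 2 < D0 := by
    rw [hD0def]; nlinarith [mul_pos h1γ (by linarith : (0:ℝ) < 1 - s 0 ^ 2)]
  have hD0pos : 0 < D0 := by nlinarith
  have hsqrtD0 : Real.sqrt D0 ^ 2 = D0 := Real.sq_sqrt hD0pos.le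
  have hsqrtD0pos : 0 < Real.sqrt D0 := Real.sqrt_pos.mpr hD0pos
  have hμ0 : 0 ≤ μ := by rw [hμ]; positivity
  have hμsq : μ ^ 2 = γ ^ 2 / D0 := by
    rw [hμ, div_pow, hsqrtD0]
  have hμ1 : μ < 1 := by
    have h1 : μ ^ 2 < 1 := by
      rw [hμsq]; rw [div_lt_one hD0pos]; exact hγ2D0
    nlinarith
  have hsd : 0 ≤ Real.sqrt δ := Real.sqrt_nonneg δ
  have hsdsq : Real.sqrt δ ^ 2 = δ := Real.sq_sqrt hδ
  -- one-step bound: s (t+1) ≤ μ * s t + √δ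
  have hstep : ∀ t : ℕ, s (t + 1) ≤ μ * s t + Real.sqrt δ := by
    intro t
    have hst0 := hs0 t
    have hst1 := hs1 t
    have hmon := hmono t
    have hst2 : s t ^ 2 ≤ s 0 ^ 2 := by nlinarith [hs0 0]
    have hDt : D0 ≤ 1 - (1 - γ ^ 2) * s t ^ 2 := by
      rw [hD0def]; nlinarith [mul_le_mul_of_nonneg_left hst2 h1γ.le]
    have hDtpos : 0 < 1 - (1 - γ ^ 2) * s t ^ 2 := lt_of_lt_of_le hD0pos hDt
    have h1 : γ ^ 2 * s t ^ 2 / (1 - (1 - γ ^ 2) * s t ^ 2) ≤ γ ^ 2 * s t ^ 2 / D0 := by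
      apply div_le_div_of_nonneg_left (by positivity) hD0pos hDt
    have h2 : γ ^ 2 * s t ^ 2 / D0 = μ ^ 2 * s t ^ 2 := by
      rw [hμsq]; ring
    have h3 : s (t + 1) ^ 2 ≤ (μ * s t + Real.sqrt δ) ^ 2 := by
      have := hrec t
      nlinarith [mul_nonneg (mul_nonneg hμ0 hst0) hsd]
    nlinarith [hs0 (t + 1), mul_nonneg hμ0 hst0, add_nonneg (mul_nonneg hμ0 hst0) hsd]
  -- induction
  intro t
  induction t with
  | zero => simp
  | succ t ih =>
    have h := hstep t
    have key : μ * (μ ^ t * s 0 + Real.sqrt δ * (1 - μ ^ t) / (1 - μ)) + Real.sqrt δ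
        = μ ^ (t + 1) * s 0 + Real.sqrt δ * (1 - μ ^ (t + 1)) / (1 - μ) := by
      have h1μ : (1 : ℝ) - μ ≠ 0 := by linarith
      field_simp
      ring
    calc s (t + 1) ≤ μ * s t + Real.sqrt δ := h
      _ ≤ μ * (μ ^ t * s 0 + Real.sqrt δ * (1 - μ ^ t) / (1 - μ)) + Real.sqrt δ := by
          have := mul_le_mul_of_nonneg_left ih hμ0
          linarith
      _ = _ := key
end

section
/- Let Ā ∈ ℝ^{p×p} be symmetric with eigenvalues λ₁ ≥ ⋯ ≥ λ_p and λ_m > 0. Let P ∈ ℝ^{p×m} have as columns orthonormal eigenvectors for λ₁,…,λ_m and P⊥ ∈ ℝ^{p×(p−m)} orthonormal eigenvectors for the remaining eigenvalues, so [P, P⊥] is orthogonal. Let Q_{t-1} ∈ ℝ^{p×m} satisfy Q_{t-1}ᵀQ_{t-1} = I_m, set X_{t-1} = PᵀQ_{t-1} and Y_{t-1} = P⊥ᵀQ_{t-1}, and assume X_{t-1} is invertible. Let Q_t R_t = ĀQ_{t-1} be a QR factorization with R_t invertible. Then ‖R_t⁻¹‖₂ ≤ 1 / (λ_m √(1 −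 ‖Y_{t-1}‖₂²)). -/
open Matrix

/-! Because `Qt` is an isometry, `‖Rt x‖ = ‖Abar Qprev x‖`. In the eigenbasis, with
`u = Vᵀ Qprev x`, the first `m` coordinates of `u` are `X x` and the others `Y x`, so
`‖X x‖² + ‖Y x‖² = ‖x‖²`, and `‖Abar Qprev x‖² = ∑ λᵢ² uᵢ² ≥ λ_m² ‖X x‖²`. Together these give
`‖Rt x‖ ≥ λ_m √(1 - ‖Y‖²) ‖x‖`, i.e. the bound on `‖Rt⁻¹‖`; invertibility of `X` is what
keeps `‖Y‖ < 1`, so that this lower bound is positive. -/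

lemma toEuclideanLin_mul_apply {l m n : Type*} [Fintype l] [Fintype m] [DecidableEq l]
    [DecidableEq m] (A : Matrix n l ℝ) (B : Matrix l m ℝ) (x : EuclideanSpace ℝ m) :
    toEuclideanLin (A * B) x = toEuclideanLin A (toEuclideanLin B x) := by
  rw [toLpLin_mul_same]
  rfl

lemma norm_toEuclideanLin_of_transpose_mul_self {m n : Type*} [Fintype m] [Fintype n]
    [DecidableEq m] [DecidableEq n] {A : Matrix n m ℝ} (hA : Aᵀ * A = 1) (x : EuclideanSpace ℝ m) :
    ‖toEuclideanLin A x‖ = ‖x‖ := by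
  refine (pow_left_inj₀ (norm_nonneg _) (norm_nonneg _) two_ne_zero).mp ?_
  rw [← real_inner_self_eq_norm_sq, ← real_inner_self_eq_norm_sq, ← LinearMap.adjoint_inner_left,
    ← toEuclideanLin_conjTranspose_eq_adjoint, conjTranspose_eq_transpose_of_trivial,
    ← toEuclideanLin_mul_apply, hA, toLpLin_one]
  rfl

lemma Fin.sum_univ_castLE_add_natAdd {M : Type*} [AddCommMonoid M] {m p : ℕ} (hmp : m ≤ p)
    (f : Fin p → M) :
    ∑ i, f i = ∑ a : Fin m, f (Fin.castLE hmp a) +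
      ∑ b : Fin (p - m), f (Fin.cast (Nat.add_sub_of_le hmp) (Fin.natAdd m b)) := by
  rw [← (finCongr (Nat.add_sub_of_le hmp)).sum_comp, Fin.sum_univ_add]
  rfl

section SpecNorm

variable {m n : ℕ}

lemma norm_toEuclideanLin_le_specNorm_mul (A : Matrix (Fin n) (Fin m) ℝ)
    (x : EuclideanSpace ℝ (Fin m)) : ‖toEuclideanLin A x‖ ≤ specNorm A * ‖x‖ :=
  (LinearMap.toContinuousLinearMap (toEuclideanLin A)).le_opNorm x

lemma specNorm_le_of_forall_norm_le {A : Matrix (Fin n) (Fin m) ℝ} {K : ℝ} (hK : 0 ≤ K)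
    (h : ∀ x, ‖toEuclideanLin A x‖ ≤ K * ‖x‖) : specNorm A ≤ K :=
  ContinuousLinearMap.opNorm_le_bound _ hK h

lemma specNorm_sq_le_of_forall_norm_sq_le {A : Matrix (Fin n) (Fin m) ℝ} {K : ℝ} (hK : 0 ≤ K)
    (h : ∀ x, ‖toEuclideanLin A x‖ ^ 2 ≤ K * ‖x‖ ^ 2) : specNorm A ^ 2 ≤ K := by
  have hA : specNorm A ≤ √K := specNorm_le_of_forall_norm_le (Real.sqrt_nonneg K) fun x => by
    rw [← Real.sqrt_sq (norm_nonneg (toEuclideanLin A x)), ← Real.sqrt_sq (norm_nonneg x),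
      ← Real.sqrt_mul hK]
    exact Real.sqrt_le_sqrt (h x)
  calc specNorm A ^ 2 ≤ √K ^ 2 := pow_le_pow_left₀ (norm_nonneg _) hA 2
    _ = K := Real.sq_sqrt hK

lemma specNorm_inv_le_of_forall_le_norm {R : Matrix (Fin m) (Fin m) ℝ} {K : ℝ} (hK : 0 < K)
    (h : ∀ x, K * ‖x‖ ≤ ‖toEuclideanLin R x‖) : specNorm R⁻¹ ≤ 1 / K := by
  have hR : IsUnit R := by
    refine mulVec_injective_iff_isUnit.mp <|
      (injective_iff_map_eq_zero (toLin' R)).mpr fun v hv => ?_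
    have hv' : K * ‖WithLp.toLp 2 v‖ ≤ 0 := by simpa [hv] using h (WithLp.toLp 2 v)
    have hv0 : ‖WithLp.toLp 2 v‖ = 0 :=
      le_antisymm (nonpos_of_mul_nonpos_right hv' hK) (norm_nonneg _)
    simpa using hv0
  refine specNorm_le_of_forall_norm_le (by positivity) fun y => ?_
  have hRy : toEuclideanLin R (toEuclideanLin R⁻¹ y) = y := by
    rw [← toEuclideanLin_mul_apply, mul_nonsing_inv _ ((isUnit_iff_isUnit_det R).mp hR),
      toLpLin_one]
    rfl
  rw [one_div_mul_eq_div, le_div_iff₀ hK, mul_comm]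
  simpa [hRy] using h (toEuclideanLin R⁻¹ y)

end SpecNorm

section Complementary

variable {m n k : ℕ} {X : Matrix (Fin n) (Fin m) ℝ} {Y : Matrix (Fin k) (Fin m) ℝ}

lemma sqrt_one_sub_specNorm_sq_mul_le
    (hXY : ∀ x, ‖toEuclideanLin X x‖ ^ 2 + ‖toEuclideanLin Y x‖ ^ 2 = ‖x‖ ^ 2)
    (x : EuclideanSpace ℝ (Fin m)) :
    √(1 - specNorm Y ^ 2) * ‖x‖ ≤ ‖toEuclideanLin X x‖ := by
  have hsq : (1 - specNorm Y ^ 2) * ‖x‖ ^ 2 ≤ ‖toEuclideanLin X x‖ ^ 2 := by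
    have hY := pow_le_pow_left₀ (norm_nonneg _) (norm_toEuclideanLin_le_specNorm_mul Y x) 2
    nlinarith [hXY x]
  calc √(1 - specNorm Y ^ 2) * ‖x‖ = √((1 - specNorm Y ^ 2) * ‖x‖ ^ 2) := by
        rw [Real.sqrt_mul' _ (sq_nonneg _), Real.sqrt_sq (norm_nonneg x)]
    _ ≤ √(‖toEuclideanLin X x‖ ^ 2) := Real.sqrt_le_sqrt hsq
    _ = ‖toEuclideanLin X x‖ := Real.sqrt_sq (norm_nonneg _)

lemma specNorm_sq_lt_one_of_isUnit {X : Matrix (Fin m) (Fin m) ℝ} (hX : IsUnit X.det)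
    (hXY : ∀ x, ‖toEuclideanLin X x‖ ^ 2 + ‖toEuclideanLin Y x‖ ^ 2 = ‖x‖ ^ 2) :
    specNorm Y ^ 2 < 1 := by
  set κ := specNorm X⁻¹
  have hκ : 0 ≤ κ := norm_nonneg _
  have hX_lower : ∀ x, ‖x‖ ≤ κ * ‖toEuclideanLin X x‖ := fun x => by
    simpa [← toEuclideanLin_mul_apply, nonsing_inv_mul _ hX] using
      norm_toEuclideanLin_le_specNorm_mul X⁻¹ (toEuclideanLin X x)
  calc specNorm Y ^ 2 ≤ κ ^ 2 / (1 + κ ^ 2) := by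
        refine specNorm_sq_le_of_forall_norm_sq_le (by positivity) fun x => ?_
        have hx := pow_le_pow_left₀ (norm_nonneg x) (hX_lower x) 2
        rw [div_mul_eq_mul_div, le_div_iff₀ (by positivity)]
        nlinarith [hXY x]
    _ < 1 := by rw [div_lt_one (by positivity)]; linarith

lemma specNorm_inv_le_of_mul_norm_le {R X : Matrix (Fin m) (Fin m) ℝ} {c : ℝ} (hc : 0 < c)
    (hX : IsUnit X.det)
    (hXY : ∀ x, ‖toEuclideanLin X x‖ ^ 2 + ‖toEuclideanLin Y x‖ ^ 2 = ‖x‖ ^ 2)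
    (hR : ∀ x, c * ‖toEuclideanLin X x‖ ≤ ‖toEuclideanLin R x‖) :
    specNorm R⁻¹ ≤ 1 / (c * √(1 - specNorm Y ^ 2)) := by
  have hY := specNorm_sq_lt_one_of_isUnit hX hXY
  refine specNorm_inv_le_of_forall_le_norm (mul_pos hc (Real.sqrt_pos.mpr (by linarith)))
    fun x => ?_
  calc c * √(1 - specNorm Y ^ 2) * ‖x‖ = c * (√(1 - specNorm Y ^ 2) * ‖x‖) := mul_assoc _ _ _
    _ ≤ c * ‖toEuclideanLin X x‖ := by gcongr; exact sqrt_one_sub_specNorm_sq_mul_le hXY x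
    _ ≤ ‖toEuclideanLin R x‖ := hR x

end Complementary

section Eigenbasis

variable {p : ℕ} {V : Matrix (Fin p) (Fin p) ℝ}

lemma toEuclideanLin_submatrix_transpose_apply {ι : Type*} [Fintype ι] [DecidableEq ι]
    (f : ι → Fin p) (y : EuclideanSpace ℝ (Fin p)) (a : ι) :
    toEuclideanLin (V.submatrix id f)ᵀ y a = toEuclideanLin Vᵀ y (f a) :=
  rfl

lemma norm_toEuclideanLin_transpose (hV : Vᵀ * V = 1) (y : EuclideanSpace ℝ (Fin p)) :
    ‖toEuclideanLin Vᵀ y‖ = ‖y‖ :=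
  norm_toEuclideanLin_of_transpose_mul_self
    (by rw [transpose_transpose]; exact mul_eq_one_comm.mp hV) y

lemma norm_sq_add_norm_sq_column_blocks (hV : Vᵀ * V = 1) {m : ℕ} (hmp : m ≤ p)
    (y : EuclideanSpace ℝ (Fin p)) :
    ‖toEuclideanLin (V.submatrix id (Fin.castLE hmp))ᵀ y‖ ^ 2 +
      ‖toEuclideanLin (V.submatrix id fun j : Fin (p - m) =>
        Fin.cast (Nat.add_sub_of_le hmp) (Fin.natAdd m j))ᵀ y‖ ^ 2 = ‖y‖ ^ 2 := by
  simp only [← norm_toEuclideanLin_transpose hV y, EuclideanSpace.real_norm_sq_eq,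
    toEuclideanLin_submatrix_transpose_apply, Fin.sum_univ_castLE_add_natAdd hmp]

lemma mul_norm_toEuclideanLin_submatrix_transpose_le (hV : Vᵀ * V = 1)
    {A : Matrix (Fin p) (Fin p) ℝ} {lam : Fin p → ℝ} (hAV : A * V = V * diagonal lam)
    {ι : Type*} [Fintype ι] [DecidableEq ι] {f : ι → Fin p} (hf : f.Injective) {c : ℝ}
    (hc : 0 ≤ c) (hlam : ∀ a, c ≤ lam (f a)) (y : EuclideanSpace ℝ (Fin p)) :
    c * ‖toEuclideanLin (V.submatrix id f)ᵀ y‖ ≤ ‖toEuclideanLin A y‖ := by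
  set u := toEuclideanLin Vᵀ y
  have hA : A = V * (diagonal lam * Vᵀ) := by
    rw [← Matrix.mul_assoc, ← hAV, Matrix.mul_assoc, mul_eq_one_comm.mp hV, Matrix.mul_one]
  have hAy : ‖toEuclideanLin A y‖ ^ 2 = ∑ i, (lam i * u i) ^ 2 := by
    rw [hA, toEuclideanLin_mul_apply, norm_toEuclideanLin_of_transpose_mul_self hV,
      toEuclideanLin_mul_apply, EuclideanSpace.real_norm_sq_eq]
    simp only [toLpLin_apply, PiLp.toLp_apply, mulVec_diagonal]
    rfl
  have hsq : (c * ‖toEuclideanLin (V.submatrix id f)ᵀ y‖) ^ 2 ≤ ‖toEuclideanLin A y‖ ^ 2 := by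
    rw [mul_pow, EuclideanSpace.real_norm_sq_eq, Finset.mul_sum, hAy]
    simp only [toEuclideanLin_submatrix_transpose_apply]
    calc ∑ a, c ^ 2 * u (f a) ^ 2 ≤ ∑ a, (lam (f a) * u (f a)) ^ 2 :=
          Finset.sum_le_sum fun a _ => by rw [mul_pow]; gcongr; exact hlam a
      _ = ∑ i ∈ Finset.univ.map ⟨f, hf⟩, (lam i * u i) ^ 2 := by rw [Finset.sum_map]; rfl
      _ ≤ ∑ i, (lam i * u i) ^ 2 :=
          Finset.sum_le_sum_of_subset_of_nonneg (Finset.subset_univ _) fun _ _ _ => sq_nonneg _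
  exact (pow_le_pow_iff_left₀ (by positivity) (norm_nonneg _) two_ne_zero).mp hsq

end Eigenbasis

/-- bound on the spectral norm of `R_t⁻¹`. -/
theorem Rt_inverse_bound
    {p m : ℕ} (hm1 : 1 ≤ m) (hmp : m ≤ p)
    (Abar : Matrix (Fin p) (Fin p) ℝ)
    (lam : Fin p → ℝ)
    (hord : ∀ i j : Fin p, i ≤ j → lam j ≤ lam i)
    (hlm : 0 < lam ⟨m - 1, by omega⟩)
    (V : Matrix (Fin p) (Fin p) ℝ) (hV : Vᵀ * V = 1)
    (hAV : Abar * V = V * Matrix.diagonal lam)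
    (P : Matrix (Fin p) (Fin m) ℝ)
    (hP : P = V.submatrix id (Fin.castLE hmp))
    (Pperp : Matrix (Fin p) (Fin (p - m)) ℝ)
    (hPperp : Pperp = V.submatrix id
      (fun j : Fin (p - m) => Fin.cast (by omega : m + (p - m) = p) (Fin.natAdd m j)))
    (Qprev : Matrix (Fin p) (Fin m) ℝ) (hQprev : Qprevᵀ * Qprev = 1)
    (X : Matrix (Fin m) (Fin m) ℝ) (hX : X = Pᵀ * Qprev)
    (Y : Matrix (Fin (p - m)) (Fin m) ℝ) (hY : Y = Pperpᵀ * Qprev)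
    (hXinv : IsUnit X.det)
    (Qt : Matrix (Fin p) (Fin m) ℝ) (Rt : Matrix (Fin m) (Fin m) ℝ)
    (hQt : Qtᵀ * Qt = 1)
    (hQR : Qt * Rt = Abar * Qprev) :
    specNorm Rt⁻¹ ≤
      1 / (lam ⟨m - 1, by omega⟩ * Real.sqrt (1 - specNorm Y ^ 2)) := by
  have hXY : ∀ x, ‖toEuclideanLin X x‖ ^ 2 + ‖toEuclideanLin Y x‖ ^ 2 = ‖x‖ ^ 2 := fun x => by
    rw [hX, hY, hP, hPperp, toEuclideanLin_mul_apply, toEuclideanLin_mul_apply,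
      norm_sq_add_norm_sq_column_blocks hV hmp,
      norm_toEuclideanLin_of_transpose_mul_self hQprev]
  refine specNorm_inv_le_of_mul_norm_le hlm hXinv hXY fun x => ?_
  rw [← norm_toEuclideanLin_of_transpose_mul_self hQt (toEuclideanLin Rt x),
    ← toEuclideanLin_mul_apply, hQR, toEuclideanLin_mul_apply, hX, hP, toEuclideanLin_mul_apply]
  refine mul_norm_toEuclideanLin_submatrix_transpose_le hV hAV (Fin.castLE_injective hmp) hlm.le
    (fun a => hord _ _ ?_) _
  exact Fin.le_def.mpr (Nat.le_sub_one_of_lt a.isLt)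
end
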